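/- arXiv:2404.03767 — 3 statements merged into one kernel-verified Lean document; each statement's English description precedes it below -/
import Mathlib

section
/- Let C = ⋂_{i ∈ [l]} H^i be a nonempty intersection of closed halfspaces H^i = {x ∈ ℝⁿ : ⟨a^i, x⟩ ≥ c^i}, and let x ∈ C. Then the dual cone of C − x equals the conic hull of {a^i : i ∈ A(x)}, where A(x) = {i : ⟨a^i, x⟩ = c^i} is the set of active constraint indices at x. -/
/-!
A vector `v` pairs nonnegatively with `C - x` iff it pairs nonnegatively with the tangent cone
`{d | ⟪aᵢ, d⟫ ≥ 0 for active i}`, since every such `d` has a positive multiple in `C - x`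
(the inactive constraints have slack). The tangent cone is the inner dual of the active normals,
so the dual of `C - x` is the double dual of their conic hull. That hull is closed, because by
Carathéodory's argument it is a finite union of injective linear images of closed orthants, and
the double dual of a closed cone is the cone itself (Farkas).
-/

open scoped RealInnerProductSpace

def dualCone {n : ℕ} (S : Set (EuclideanSpace ℝ (Fin n))) : Set (EuclideanSpace ℝ (Fin n)) :=
  {v | ∀ d ∈ S, 0 ≤ ⟪v, d⟫}

open Set Finset Filter Topology PointedCone ProperCone

/-- Minimum ratio test: `μ` is the largest step along `g` keeping `t + μ • g` nonnegative on `S`. -/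
theorem Finset.exists_add_mul_nonneg_and_eq_zero {ι : Type*} (S : Finset ι) {t g : ι → ℝ}
    (ht : ∀ i ∈ S, 0 ≤ t i) (hg : ∃ j ∈ S, g j < 0) :
    ∃ μ : ℝ, ∃ j ∈ S, (∀ i ∈ S, 0 ≤ t i + μ * g i) ∧ t j + μ * g j = 0 := by
  classical
  obtain ⟨j, hj, hj_min⟩ := (S.filter (g · < 0)).exists_min_image (fun i ↦ t i / -g i)
    (filter_nonempty_iff.2 hg)
  obtain ⟨hjS, hgj⟩ := mem_filter.1 hj
  have hgj_ne := hgj.ne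
  refine ⟨t j / -g j, j, hjS, fun i hi ↦ ?_, by field_simp; ring⟩
  rcases lt_or_ge (g i) 0 with hgi | hgi
  · have := hj_min i (mem_filter.2 ⟨hi, hgi⟩)
    rw [le_div_iff₀ (neg_pos.2 hgi)] at this
    linarith
  · have := div_nonneg (ht j hjS) (neg_nonneg.2 hgj.le)
    nlinarith [ht i hi]

namespace PointedCone

section Hull

variable {ι E : Type*} [AddCommGroup E] [Module ℝ E]

theorem mem_hull_image_finset_iff {v : ι → E} {S : Finset ι} {y : E} :
    y ∈ hull ℝ (v '' S) ↔ ∃ t : ι → ℝ, (∀ i ∈ S, 0 ≤ t i) ∧ ∑ i ∈ S, t i • v i = y := by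
  rw [Submodule.mem_span_image_finset_iff_exists_fun']
  constructor
  · rintro ⟨c, rfl⟩
    exact ⟨fun i ↦ c i, fun i _ ↦ (c i).2, rfl⟩
  · rintro ⟨t, ht, rfl⟩
    refine ⟨fun i ↦ ⟨max (t i) 0, le_max_right _ _⟩, sum_congr rfl fun i hi ↦ ?_⟩
    change max (t i) 0 • v i = t i • v i
    rw [max_eq_left (ht i hi)]

theorem coe_hull_image_finset_eq_image_Ici (v : ι → E) (S : Finset ι) :
    (hull ℝ (v '' S) : Set E) =
      Fintype.linearCombination ℝ (fun i : (S : Set ι) ↦ v i) '' Set.Ici 0 := by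
  ext y
  rw [SetLike.mem_coe, Fintype.mem_span_image_iff_exists_fun]
  simp only [Set.mem_image, Set.mem_Ici, Fintype.linearCombination_apply]
  constructor
  · rintro ⟨c, rfl⟩
    exact ⟨fun i ↦ c i, fun i ↦ (c i).2, rfl⟩
  · rintro ⟨t, ht, rfl⟩
    exact ⟨fun i ↦ ⟨t i, ht i⟩, rfl⟩

theorem coe_hull_image_eq_nonneg_combinations [Fintype ι] (v : ι → E) (S : Set ι) :
    (hull ℝ (v '' S) : Set E) =
      {y | ∃ t : ι → ℝ, (∀ i, 0 ≤ t i) ∧ (∀ i ∉ S, t i = 0) ∧ y = ∑ i, t i • v i} := by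
  classical
  obtain ⟨S, rfl⟩ := S.toFinite.exists_finset_coe
  ext y
  rw [SetLike.mem_coe, mem_hull_image_finset_iff]
  constructor
  · rintro ⟨t, ht, rfl⟩
    refine ⟨(S : Set ι).indicator t, indicator_nonneg ht,
      fun i hi ↦ indicator_of_notMem hi t, ?_⟩
    simp_rw [← indicator_smul_apply_left, sum_indicator_subset _ (subset_univ S)]
  · rintro ⟨t, ht, hS, rfl⟩
    refine ⟨t, fun i _ ↦ ht i, sum_subset (subset_univ S) fun i _ hi ↦ ?_⟩
    rw [hS i hi, zero_smul]

theorem exists_mem_hull_image_erase [DecidableEq ι] {v : ι → E} {S : Finset ι}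
    (hS : ¬LinearIndepOn ℝ v S) {y : E} (hy : y ∈ hull ℝ (v '' S)) :
    ∃ j ∈ S, y ∈ hull ℝ (v '' ↑(S.erase j)) := by
  obtain ⟨t, ht, rfl⟩ := mem_hull_image_finset_iff.1 hy
  obtain ⟨g, hg, hg_neg⟩ : ∃ g : ι → ℝ, ∑ i ∈ S, g i • v i = 0 ∧ ∃ j ∈ S, g j < 0 := by
    obtain ⟨g, hg, j, hj, hgj⟩ := not_linearIndepOn_finset_iff.1 hS
    rcases hgj.lt_or_gt with hgj | hgj
    · exact ⟨g, hg, j, hj, hgj⟩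
    · exact ⟨-g, by simp [neg_smul, sum_neg_distrib, hg], j, hj, by simpa using hgj⟩
  obtain ⟨μ, j, hj, h_nonneg, h_zero⟩ := S.exists_add_mul_nonneg_and_eq_zero ht hg_neg
  refine ⟨j, hj, mem_hull_image_finset_iff.2
    ⟨fun i ↦ t i + μ * g i, fun i hi ↦ h_nonneg i (mem_of_mem_erase hi), ?_⟩⟩
  calc ∑ i ∈ S.erase j, (t i + μ * g i) • v i = ∑ i ∈ S, (t i + μ * g i) • v i :=
        sum_erase _ (by rw [h_zero, zero_smul])
    _ = ∑ i ∈ S, t i • v i := by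
        simp only [add_smul, mul_smul, sum_add_distrib, ← smul_sum, hg, smul_zero, add_zero]

variable [TopologicalSpace E] [IsTopologicalAddGroup E] [ContinuousSMul ℝ E] [T2Space E]

theorem isClosed_hull_image_finset (v : ι → E) (S : Finset ι) :
    IsClosed (hull ℝ (v '' S) : Set E) := by
  classical
  induction S using Finset.strongInduction with
  | H S ih =>
  by_cases hS : LinearIndepOn ℝ v S
  · rw [coe_hull_image_finset_eq_image_Ici]
    exact (LinearMap.isClosedEmbedding_of_injective (LinearMap.ker_eq_bot.2
      hS.fintypeLinearCombination_injective)).isClosedMap _ isClosed_Ici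
  · have h_union : (hull ℝ (v '' S) : Set E) = ⋃ j ∈ S, hull ℝ (v '' ↑(S.erase j)) := by
      refine subset_antisymm (fun y hy ↦ by simpa using exists_mem_hull_image_erase hS hy) ?_
      exact iUnion₂_subset fun j _ ↦
        Submodule.span_mono (image_mono (coe_subset.2 (erase_subset j S)))
    rw [h_union]
    exact isClosed_biUnion_finset fun j hj ↦ ih _ (erase_ssubset hj)

end Hull

end PointedCone

namespace ProperCone

variable {ι E : Type*} [NormedAddCommGroup E] [InnerProductSpace ℝ E]

theorem innerDual_hull [CompleteSpace E] (s : Set E) :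
    innerDual (hull ℝ s : Set E) = innerDual s := by
  ext y
  exact SetLike.ext_iff.1 (PointedCone.dual_hull (p := innerₗ E) s) y

theorem coe_innerDual_innerDual_image [CompleteSpace E] [FiniteDimensional ℝ E] [Finite ι]
    (v : ι → E) (S : Set ι) :
    (innerDual (innerDual (v '' S) : Set E) : Set E) = hull ℝ (v '' S) := by
  obtain ⟨S, rfl⟩ := S.toFinite.exists_finset_coe
  rw [← innerDual_hull (v '' S)]
  exact congrArg SetLike.coe
    (innerDual_innerDual ⟨hull ℝ (v '' S), isClosed_hull_image_finset v S⟩)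

end ProperCone

section Polyhedron

variable {ι F : Type*} [NormedAddCommGroup F] [InnerProductSpace ℝ F]
  {a : ι → F} {c : ι → ℝ} {x : F}

theorem exists_pos_forall_le_inner_add_smul [Finite ι] {d : F} (hx : ∀ i, c i ≤ ⟪a i, x⟫)
    (hd : ∀ i, ⟪a i, x⟫ = c i → 0 ≤ ⟪a i, d⟫) :
    ∃ ε : ℝ, 0 < ε ∧ ∀ i, c i ≤ ⟪a i, x + ε • d⟫ := by
  have h_ev : ∀ i, ∀ᶠ ε in 𝓝[>] (0 : ℝ), c i ≤ ⟪a i, x + ε • d⟫ := by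
    intro i
    simp_rw [inner_add_right, real_inner_smul_right]
    rcases (hx i).eq_or_lt with h_act | h_inact
    · filter_upwards [self_mem_nhdsWithin] with ε hε
      nlinarith [hd i h_act.symm, mem_Ioi.1 hε]
    · have h_lim : Tendsto (fun ε : ℝ ↦ ⟪a i, x⟫ + ε * ⟪a i, d⟫) (𝓝 0) (𝓝 ⟪a i, x⟫) :=
        (continuous_const.add (continuous_id.mul continuous_const)).tendsto' 0 _ (by simp)
      exact nhdsWithin_le_nhds ((h_lim.eventually (eventually_gt_nhds h_inact)).mono
        fun _ h ↦ h.le)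
  obtain ⟨ε, hε, hε_pos⟩ := ((eventually_all.2 h_ev).and self_mem_nhdsWithin).exists
  exact ⟨ε, hε_pos, hε⟩

theorem innerDual_image_sub_iInter_halfspace [CompleteSpace F] [Finite ι]
    (hx : x ∈ ⋂ i, {y : F | c i ≤ ⟪a i, y⟫}) :
    innerDual ((· - x) '' ⋂ i, {y : F | c i ≤ ⟪a i, y⟫}) =
      innerDual (innerDual (a '' {i | ⟪a i, x⟫ = c i}) : Set F) := by
  refine le_antisymm (fun v hv d hd ↦ ?_) (innerDual_le_innerDual ?_)
  · obtain ⟨ε, hε, hε_mem⟩ := exists_pos_forall_le_inner_add_smul (fun i ↦ mem_iInter.1 hx i)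
      fun i hi ↦ hd (mem_image_of_mem a hi)
    have h : 0 ≤ ⟪ε • d, v⟫ := hv ⟨x + ε • d, mem_iInter.2 hε_mem, add_sub_cancel_left x _⟩
    rw [real_inner_smul_left] at h
    exact nonneg_of_mul_nonneg_right h hε
  · rintro _ ⟨y, hy, rfl⟩ _ ⟨i, hi, rfl⟩
    show 0 ≤ ⟪a i, y - x⟫
    rw [inner_sub_right, hi]
    exact sub_nonneg.2 (mem_iInter.1 hy i)

end Polyhedron

theorem dualCone_eq_innerDual {n : ℕ} (S : Set (EuclideanSpace ℝ (Fin n))) :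
    dualCone S = innerDual S := by
  ext v
  simp [dualCone, real_inner_comm]

theorem dualCone_polyhedron_sub_general {n l : ℕ} (a : Fin l → EuclideanSpace ℝ (Fin n))
    (c : Fin l → ℝ)
    (x : EuclideanSpace ℝ (Fin n))
    (hx : x ∈ ⋂ i, {y : EuclideanSpace ℝ (Fin n) | c i ≤ ⟪a i, y⟫}) :
    dualCone ((fun y => y - x) '' ⋂ i, {y : EuclideanSpace ℝ (Fin n) | c i ≤ ⟪a i, y⟫}) =
      {v | ∃ t : Fin l → ℝ, (∀ i, 0 ≤ t i) ∧ (∀ i, ⟪a i, x⟫ ≠ c i → t i = 0) ∧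
        v = ∑ i, t i • a i} := by
  rw [dualCone_eq_innerDual, innerDual_image_sub_iInter_halfspace hx,
    coe_innerDual_innerDual_image, coe_hull_image_eq_nonneg_combinations]
  rfl

/-- The dual cone of `C - x`, for `C` a nonempty intersection of closed halfspaces and
`x ∈ C`, is the conic hull of the active constraint normals. -/
theorem dualCone_polyhedron_sub {n l : ℕ} (a : Fin l → EuclideanSpace ℝ (Fin n))
    (c : Fin l → ℝ)
    (hC : (⋂ i, {y : EuclideanSpace ℝ (Fin n) | c i ≤ ⟪a i, y⟫}).Nonempty)
    (x : EuclideanSpace ℝ (Fin n))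
    (hx : x ∈ ⋂ i, {y : EuclideanSpace ℝ (Fin n) | c i ≤ ⟪a i, y⟫}) :
    dualCone ((fun y => y - x) '' ⋂ i, {y : EuclideanSpace ℝ (Fin n) | c i ≤ ⟪a i, y⟫}) =
      {v | ∃ t : Fin l → ℝ, (∀ i, 0 ≤ t i) ∧ (∀ i, ⟪a i, x⟫ ≠ c i → t i = 0) ∧
        v = ∑ i, t i • a i} :=
  dualCone_polyhedron_sub_general a c x hx
end

section
/- Let f(x,w) be convex and quadratic in x for each w, with ∇_x f(x,w) = Qx + Rw + q affine, and let C = ⋂_{i ∈ [l]} {(x,w) : ⟨x,a^i⟩ + ⟨w,b^i⟩ ≥ c^i} be a closed nonempty polyhedron in ℝⁿ × ℝᵐ. Then the solution graph S = {(x,w) ∈ C : x is a (global) minimizer of f(·,w) over C_w} equals the union over all subsets L ⊆ [l] of the sets {(x,w) ∈ C : ⟨x,a^i⟩ + ⟨w,b^i⟩ = c^i for all i ∈ L, and ∇_x f(x,w) ∈ coni({a^i}_{i ∈ L})}. In particular, S is a finite union of polyhedral sets. -/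
open scoped RealInnerProductSpace

/-- The slice of a set `C ⊆ E × F` at parameter `w`. -/
def Slice {E F : Type*} (C : Set (E × F)) (w : F) : Set E := {x | (x, w) ∈ C}

/-!
For fixed `w` the slice `C_w` is a polyhedron `{x | β i ≤ ⟪a i, x⟫}` and `f (·, w)` is convex
with gradient `Q x + R w + q`. A feasible `x` minimises a convex differentiable function over a
polyhedron iff its gradient lies in the cone spanned by the normals of the active constraints:
sufficiency is the gradient inequality, necessity is Fermat's rule along the feasible directions
`{d | 0 ≤ ⟪a i, d⟫ for active i}` followed by Farkas' lemma. Farkas' lemma is Hahn–Banach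
separation from a closed cone; a finitely generated cone is closed because, by Carathéodory, it
is a finite union of simplicial cones, each the image of an orthant under an injective linear map.
The set `L` in the theorem can always be taken to be the active set, since enlarging `L` only
enlarges the cone.
-/

open Filter Topology Finset

section ConicHull

variable {ι H : Type*} [Fintype ι] [AddCommGroup H] [Module ℝ H]

def conicHull (a : ι → H) (L : Set ι) : PointedCone ℝ H where
  carrier := {x | ∃ t : ι → ℝ, (∀ i, 0 ≤ t i) ∧ (∀ i ∉ L, t i = 0) ∧ x = ∑ i, t i • a i}
  zero_mem' := ⟨0, fun _ => le_rfl, fun _ _ => rfl, by simp⟩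
  add_mem' := by
    rintro _ _ ⟨t, ht, htL, rfl⟩ ⟨u, hu, huL, rfl⟩
    exact ⟨t + u, fun i => add_nonneg (ht i) (hu i), fun i hi => by simp [htL i hi, huL i hi],
      by simp [add_smul, sum_add_distrib]⟩
  smul_mem' := by
    rintro ⟨r, hr⟩ _ ⟨t, ht, htL, rfl⟩
    exact ⟨r • t, fun i => mul_nonneg hr (ht i), fun i hi => by simp [htL i hi],
      by simp [smul_sum, smul_smul]⟩

variable {a : ι → H} {L L' : Set ι} {x : H}

theorem conicHull_mono (h : L ⊆ L') : conicHull a L ≤ conicHull a L' := by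
  rintro x ⟨t, ht, htL, rfl⟩
  exact ⟨t, ht, fun i hi => htL i (fun hiL => hi (h hiL)), rfl⟩

theorem apply_mem_conicHull {i : ι} (hi : i ∈ L) : a i ∈ conicHull a L := by
  classical
  exact ⟨Pi.single i 1, fun j => by by_cases h : j = i <;> simp [h],
    fun j hj => Pi.single_eq_of_ne (by rintro rfl; exact hj hi) _, by simp [Pi.single_apply]⟩


theorem exists_mem_conicHull_erase_of_sum_eq_zero [DecidableEq ι] {s : Finset ι} {g : ι → ℝ}
    (hx : x ∈ conicHull a s) (hg : ∑ i ∈ s, g i • a i = 0) (hpos : ∃ j ∈ s, 0 < g j) :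
    ∃ i₀ ∈ s, x ∈ conicHull a ↑(s.erase i₀) := by
  -- Slide `t` along the dependence `g` until its first coefficient vanishes.
  obtain ⟨t, ht, hts, rfl⟩ := hx
  set P := s.filter (0 < g ·)
  obtain ⟨i₀, hi₀P, hmin⟩ := P.exists_min_image (fun i => t i / g i) <| by
    obtain ⟨j, hj, hgj⟩ := hpos
    exact ⟨j, mem_filter.2 ⟨hj, hgj⟩⟩
  obtain ⟨hi₀, hgi₀⟩ := mem_filter.1 hi₀P
  set r := t i₀ / g i₀
  have hr : 0 ≤ r := div_nonneg (ht i₀) hgi₀.le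
  refine ⟨i₀, hi₀, fun i => if i ∈ s then t i - r * g i else 0, fun i => ?_, fun i hi => ?_, ?_⟩
  · dsimp only
    split_ifs with his
    · rcases lt_or_ge 0 (g i) with hgi | hgi
      · have := (le_div_iff₀ hgi).1 (hmin i (mem_filter.2 ⟨his, hgi⟩))
        linarith
      · nlinarith [ht i]
    · exact le_rfl
  · dsimp only
    split_ifs with his
    · have : i = i₀ := by by_contra h; exact hi (mem_erase.2 ⟨h, his⟩)
      subst this
      simp only [r, div_mul_cancel₀ _ hgi₀.ne', sub_self]
    · rfl
  · simp only [ite_smul, zero_smul, sum_ite_mem, univ_inter, sub_smul, sum_sub_distrib,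
      mul_smul, ← smul_sum, hg, smul_zero, sub_zero]
    exact (sum_subset (subset_univ s) fun i _ hi => by simp [hts i hi]).symm

theorem exists_linearIndepOn_of_mem_conicHull (s : Finset ι) (hx : x ∈ conicHull a s) :
    ∃ s' ⊆ s, LinearIndepOn ℝ a (s' : Set ι) ∧ x ∈ conicHull a s' := by
  classical
  induction s using Finset.strongInduction with
  | H s ih =>
    by_cases hli : LinearIndepOn ℝ a (s : Set ι)
    · exact ⟨s, subset_rfl, hli, hx⟩
    obtain ⟨g, hg, j, hj, hgj⟩ := not_linearIndepOn_finset_iff.1 hli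
    obtain ⟨i₀, hi₀, hx'⟩ : ∃ i₀ ∈ s, x ∈ conicHull a ↑(s.erase i₀) := by
      rcases hgj.lt_or_gt with hneg | hpos
      · exact exists_mem_conicHull_erase_of_sum_eq_zero (g := -g) hx
          (by simp [neg_smul, sum_neg_distrib, hg]) ⟨j, hj, neg_pos.2 hneg⟩
      · exact exists_mem_conicHull_erase_of_sum_eq_zero hx hg ⟨j, hj, hpos⟩
    obtain ⟨s', hs', hli', hx''⟩ := ih _ (erase_ssubset hi₀) hx'
    exact ⟨s', hs'.trans (erase_subset _ _), hli', hx''⟩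

theorem conicHull_eq_biUnion_linearIndepOn :
    (conicHull a L : Set H) =
      ⋃ s ∈ {s : Finset ι | ↑s ⊆ L ∧ LinearIndepOn ℝ a (s : Set ι)}, conicHull a s := by
  classical
  refine subset_antisymm (fun x hx => ?_) (Set.iUnion₂_subset fun s hs => conicHull_mono hs.1)
  rw [← Set.coe_toFinset L] at hx
  obtain ⟨s', hs', hli, hx'⟩ := exists_linearIndepOn_of_mem_conicHull _ hx
  exact Set.mem_biUnion ⟨fun i hi => by simpa using hs' hi, hli⟩ hx'

theorem sum_coe_sort_smul_of_forall_notMem {s : Finset ι} {t : ι → ℝ} (ht : ∀ i ∉ s, t i = 0) :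
    ∑ i : s, t i • a i = ∑ i, t i • a i := by
  rw [sum_coe_sort s fun i => t i • a i]
  exact sum_subset (subset_univ s) fun i _ hi => by simp [ht i hi]

theorem conicHull_eq_image (s : Finset ι) :
    (conicHull a s : Set H) = Fintype.linearCombination ℝ (fun i : s => a i) '' Set.Ici 0 := by
  ext x
  constructor
  · rintro ⟨t, ht, hts, rfl⟩
    exact ⟨fun i => t i, fun i => ht i, by
      rw [Fintype.linearCombination_apply]; exact sum_coe_sort_smul_of_forall_notMem hts⟩
  · rintro ⟨u, hu, rfl⟩
    have hext : ∀ i : s, Subtype.val.extend u 0 (i : ι) = u i :=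
      Subtype.val_injective.extend_apply u 0
    have hzero : ∀ i ∉ s, Subtype.val.extend u (0 : ι → ℝ) i = 0 := fun i hi =>
      Function.extend_apply' _ _ _ fun ⟨j, hj⟩ => hi (hj ▸ j.2)
    refine ⟨Subtype.val.extend u 0, fun i => ?_, hzero, ?_⟩
    · by_cases hi : i ∈ s
      · simpa [hext ⟨i, hi⟩] using hu ⟨i, hi⟩
      · simp [hzero i hi]
    · rw [Fintype.linearCombination_apply, ← sum_coe_sort_smul_of_forall_notMem hzero]
      simp only [hext]

end ConicHull

section Topology

variable {ι H : Type*} [Fintype ι] [AddCommGroup H] [Module ℝ H] [TopologicalSpace H]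
  [IsTopologicalAddGroup H] [ContinuousSMul ℝ H] [T2Space H] {a : ι → H}

theorem isClosed_conicHull_of_linearIndepOn {s : Finset ι} (h : LinearIndepOn ℝ a (s : Set ι)) :
    IsClosed (conicHull a s : Set H) := by
  rw [conicHull_eq_image]
  have hinj : LinearMap.ker (Fintype.linearCombination ℝ (fun i : s => a i)) = ⊥ :=
    LinearMap.ker_eq_bot.2 (linearIndependent_iff_injective_fintypeLinearCombination.1 h)
  exact (LinearMap.isClosedEmbedding_of_injective hinj).isClosedMap _ isClosed_Ici

theorem isClosed_conicHull (L : Set ι) : IsClosed (conicHull a L : Set H) := by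
  rw [conicHull_eq_biUnion_linearIndepOn]
  exact (Set.toFinite _).isClosed_biUnion fun s hs => isClosed_conicHull_of_linearIndepOn hs.2

end Topology

section Gradient

variable {H : Type*} [NormedAddCommGroup H] [InnerProductSpace ℝ H] [CompleteSpace H]
  {f : H → ℝ} {g x y : H}

theorem ConvexOn.inner_gradient_le {s : Set H} (hf : ConvexOn ℝ s f) (hx : x ∈ s) (hy : y ∈ s)
    (hg : HasGradientAt f g x) : ⟪g, y - x⟫ ≤ f y - f x := by
  let γ : ℝ →ᵃ[ℝ] H := AffineMap.lineMap x y
  have hconv := hf.comp_affineMap γ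
  have hderiv : HasDerivAt (f ∘ γ) ⟪g, y - x⟫ 0 := by
    simpa using hg.hasFDerivAt.comp_hasDerivAt_of_eq (0 : ℝ) AffineMap.hasDerivAt_lineMap
      (AffineMap.lineMap_apply_zero x y).symm
  simpa [slope_def_field, γ] using
    hconv.le_slope_of_hasDerivAt (by simpa [γ] using hx) (by simpa [γ] using hy) zero_lt_one hderiv

end Gradient

section Polyhedron

variable {ι H : Type*} [NormedAddCommGroup H] [InnerProductSpace ℝ H]

def polyhedron (a : ι → H) (β : ι → ℝ) : Set H := {x | ∀ i, β i ≤ ⟪a i, x⟫}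

variable {a : ι → H} {β : ι → ℝ} {x : H}

theorem convex_polyhedron : Convex ℝ (polyhedron a β) := by
  simp only [polyhedron, Set.ofPred_forall]
  exact convex_iInter fun i => convex_halfSpace_ge (innerₛₗ ℝ (a i)).isLinear (β i)

theorem eventually_add_smul_mem_polyhedron [Finite ι] (hx : x ∈ polyhedron a β) {d : H}
    (hd : ∀ i, ⟪a i, x⟫ = β i → 0 ≤ ⟪a i, d⟫) :
    ∀ᶠ s in 𝓝[>] (0 : ℝ), x + s • d ∈ polyhedron a β := by
  simp only [polyhedron, Set.mem_ofPred_eq, inner_add_right, inner_smul_right, eventually_all]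
  intro i
  rcases (hx i).eq_or_lt with hact | hslack
  · filter_upwards [self_mem_nhdsWithin] with s hs
    nlinarith [hd i hact.symm, Set.mem_Ioi.1 hs]
  · have hcont : Continuous fun s : ℝ => ⟪a i, x⟫ + s * ⟪a i, d⟫ := by fun_prop
    have := hcont.tendsto 0 |>.eventually (lt_mem_nhds (by simpa using hslack))
    exact (eventually_nhdsWithin_of_eventually_nhds this).mono fun s => le_of_lt

end Polyhedron

section Optimality

variable {ι H : Type*} [Fintype ι] [NormedAddCommGroup H] [InnerProductSpace ℝ H]
  [CompleteSpace H] {a : ι → H} {β : ι → ℝ} {f : H → ℝ} {g x : H}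

theorem mem_conicHull_of_forall_inner_nonneg {L : Set ι}
    (h : ∀ d, (∀ i ∈ L, 0 ≤ ⟪a i, d⟫) → 0 ≤ ⟪g, d⟫) : g ∈ conicHull a L := by
  by_contra hg
  obtain ⟨d, hd, hgd⟩ := ProperCone.hyperplane_separation' ⟨conicHull a L, isClosed_conicHull L⟩ hg
  have := h d fun i hi => real_inner_comm (a i) d ▸ hd (a i) (apply_mem_conicHull hi)
  linarith

theorem IsMinOn.mem_conicHull_active (hmin : IsMinOn f (polyhedron a β) x)
    (hx : x ∈ polyhedron a β) (hg : HasGradientAt f g x) :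
    g ∈ conicHull a {i | ⟪a i, x⟫ = β i} := by
  refine mem_conicHull_of_forall_inner_nonneg fun d hd => ?_
  have hdir : d ∈ posTangentConeAt (polyhedron a β) x :=
    mem_posTangentConeAt_of_frequently_mem (eventually_add_smul_mem_polyhedron hx hd).frequently
  simpa using hmin.localize.hasFDerivWithinAt_nonneg hg.hasFDerivAt.hasFDerivWithinAt hdir

theorem isMinOn_of_mem_conicHull_active (hf : ConvexOn ℝ (polyhedron a β) f)
    (hx : x ∈ polyhedron a β) (hg : HasGradientAt f g x)
    (hcone : g ∈ conicHull a {i | ⟪a i, x⟫ = β i}) : IsMinOn f (polyhedron a β) x := by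
  obtain ⟨t, ht, htA, rfl⟩ := hcone
  refine isMinOn_iff.2 fun y hy => ?_
  have hinner : 0 ≤ ⟪∑ i, t i • a i, y - x⟫ := by
    rw [sum_inner]
    refine sum_nonneg fun i _ => ?_
    rw [real_inner_smul_left, inner_sub_right]
    by_cases hi : ⟪a i, x⟫ = β i
    · exact mul_nonneg (ht i) (by linarith [hy i])
    · simp [htA i hi]
  linarith [hf.inner_gradient_le hx hy hg]

theorem isMinOn_polyhedron_iff (hf : ConvexOn ℝ (polyhedron a β) f) (hx : x ∈ polyhedron a β)
    (hg : HasGradientAt f g x) :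
    IsMinOn f (polyhedron a β) x ↔ g ∈ conicHull a {i | ⟪a i, x⟫ = β i} :=
  ⟨fun hmin => hmin.mem_conicHull_active hx hg, isMinOn_of_mem_conicHull_active hf hx hg⟩

end Optimality

theorem qp_solGraph_eq_union_general {n m l : ℕ}
    (f : EuclideanSpace ℝ (Fin n) × EuclideanSpace ℝ (Fin m) → ℝ)
    (Q : EuclideanSpace ℝ (Fin n) →L[ℝ] EuclideanSpace ℝ (Fin n))
    (R : EuclideanSpace ℝ (Fin m) →L[ℝ] EuclideanSpace ℝ (Fin n))
    (q : EuclideanSpace ℝ (Fin n))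
    (hconv : ∀ w, ConvexOn ℝ Set.univ fun x => f (x, w))
    (hdiff : ∀ w, Differentiable ℝ fun x => f (x, w))
    (hgrad : ∀ x w, gradient (fun y => f (y, w)) x = Q x + R w + q)
    (a : Fin l → EuclideanSpace ℝ (Fin n)) (b : Fin l → EuclideanSpace ℝ (Fin m))
    (c : Fin l → ℝ)
    (C : Set (EuclideanSpace ℝ (Fin n) × EuclideanSpace ℝ (Fin m)))
    (hC : C = ⋂ i, {p : EuclideanSpace ℝ (Fin n) × EuclideanSpace ℝ (Fin m) |
      c i ≤ ⟪a i, p.1⟫ + ⟪b i, p.2⟫}) :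
    {p ∈ C | ∀ y ∈ Slice C p.2, f p ≤ f (y, p.2)} =
      ⋃ L : Set (Fin l),
        {p ∈ C | (∀ i ∈ L, ⟪a i, p.1⟫ + ⟪b i, p.2⟫ = c i) ∧
          ∃ t : Fin l → ℝ, (∀ i, 0 ≤ t i) ∧ (∀ i ∉ L, t i = 0) ∧
            Q p.1 + R p.2 + q = ∑ i, t i • a i} := by
  ext ⟨x, w⟩
  set β : Fin l → ℝ := fun i => c i - ⟪b i, w⟫
  have hslice : Slice C w = polyhedron a β := by
    ext y
    simp [Slice, hC, polyhedron, β]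
  have hmem : (x, w) ∈ C ↔ x ∈ polyhedron a β := by rw [← hslice]; rfl
  have hactive : {i | ⟪a i, x⟫ = β i} = {i | ⟪a i, x⟫ + ⟪b i, w⟫ = c i} := by
    ext i; exact eq_sub_iff_add_eq
  have hg : HasGradientAt (fun y => f (y, w)) (Q x + R w + q) x :=
    hgrad x w ▸ (hdiff w x).hasGradientAt
  have hconvP := (hconv w).subset (Set.subset_univ _) (convex_polyhedron (a := a) (β := β))
  simp only [Set.mem_sep_iff, Set.mem_iUnion, hslice]
  constructor
  · rintro ⟨hxC, hmin⟩
    have hcone := (isMinOn_polyhedron_iff hconvP (hmem.1 hxC) hg).1 (isMinOn_iff.2 hmin)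
    rw [hactive] at hcone
    exact ⟨_, hxC, fun i hi => hi, hcone⟩
  · rintro ⟨L, hxC, hL, hcone⟩
    refine ⟨hxC, isMinOn_iff.1 ((isMinOn_polyhedron_iff hconvP (hmem.1 hxC) hg).2 ?_)⟩
    exact conicHull_mono (fun i hi => hactive ▸ hL i hi) hcone

/-- The solution graph of a convex QP with polyhedral constraints is the union, over
subsets `L` of the constraints, of the sets where the constraints in `L` are active and
the partial gradient lies in the conic hull of the active normals. -/
theorem qp_solGraph_eq_union {n m l : ℕ}
    (f : EuclideanSpace ℝ (Fin n) × EuclideanSpace ℝ (Fin m) → ℝ)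
    (Q : EuclideanSpace ℝ (Fin n) →L[ℝ] EuclideanSpace ℝ (Fin n))
    (R : EuclideanSpace ℝ (Fin m) →L[ℝ] EuclideanSpace ℝ (Fin n))
    (q : EuclideanSpace ℝ (Fin n))
    (hconv : ∀ w, ConvexOn ℝ Set.univ fun x => f (x, w))
    (hdiff : ∀ w, Differentiable ℝ fun x => f (x, w))
    (hgrad : ∀ x w, gradient (fun y => f (y, w)) x = Q x + R w + q)
    (a : Fin l → EuclideanSpace ℝ (Fin n)) (b : Fin l → EuclideanSpace ℝ (Fin m))
    (c : Fin l → ℝ)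
    (C : Set (EuclideanSpace ℝ (Fin n) × EuclideanSpace ℝ (Fin m)))
    (hC : C = ⋂ i, {p : EuclideanSpace ℝ (Fin n) × EuclideanSpace ℝ (Fin m) |
      c i ≤ ⟪a i, p.1⟫ + ⟪b i, p.2⟫})
    (hne : C.Nonempty) :
    {p ∈ C | ∀ y ∈ Slice C p.2, f p ≤ f (y, p.2)} =
      ⋃ L : Set (Fin l),
        {p ∈ C | (∀ i ∈ L, ⟪a i, p.1⟫ + ⟪b i, p.2⟫ = c i) ∧
          ∃ t : Fin l → ℝ, (∀ i, 0 ≤ t i) ∧ (∀ i ∉ L, t i = 0) ∧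
            Q p.1 + R p.2 + q = ∑ i, t i • a i} :=
  qp_solGraph_eq_union_general f Q R q hconv hdiff hgrad a b c C hC
end

section
/- Let Q be symmetric positive semidefinite, and consider the QP of minimizing ½yᵀQy + qᵀy over the closed polyhedron {y : Ay + b ≥ 0}. Fix a feasible x with active index set I_p = {i : (Ax+b)_i = 0} and a multiplier λ* certifying optimality (λ* ≥ 0, λ*_i = 0 for i ∉ I_p, Qx + q = Aᵀλ*). For any subset I_a ⊆ I_p containing the strongly active indices {i ∈ I_p : λ*_i > 0}, the set H(I_a) = {(y,λ) : Qy + q = Aᵀλ, (Ay+b)_i = 0 for i ∈ I_a, (Ay+b)_i ≥ 0 for i ∉ I_a, λ_i ≥ 0 for i ∈ I_a, λ_i = 0 for i ∉ I_a} is a nonempty closed polyhedron in ℝⁿ × ℝᵐ containing (x, λ*), and every (y,λ) ∈ H(I_a) satisfies the KKT conditions, so y is a global minimizer of the QP. -/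
/-
For a convex quadratic objective `f`, `f z - f y = ½ (z - y)ᵀQ(z - y) + ∇f(y)ᵀ(z - y)`, and at a
KKT pair `(y, λ)` the gradient term equals `λᵀ(Az + b) ≥ 0`, so KKT points are global minimizers.
Every point of `H(I_a)` is a KKT pair: on `I_a` the constraint is tight, off `I_a` the multiplier
vanishes, so complementary slackness holds coordinatewise. `(x, λ*)` lies in `H(I_a)` because `λ*`
vanishes off the strongly active set. Finally `H(I_a)` is cut out by finitely many affine
equalities and inequalities in `(y, λ)`, hence is a polyhedron.
-/

open Matrix

/-- A polyhedron in `(Fin n → ℝ) × (Fin m → ℝ)`: a finite intersection of closed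
halfspaces. -/
def IsPolyPi {n m : ℕ} (S : Set ((Fin n → ℝ) × (Fin m → ℝ))) : Prop :=
  ∃ (k : ℕ) (u : Fin k → Fin n → ℝ) (v : Fin k → Fin m → ℝ) (w : Fin k → ℝ),
    S = ⋂ i, {p : (Fin n → ℝ) × (Fin m → ℝ) | w i ≤ u i ⬝ᵥ p.1 + v i ⬝ᵥ p.2}

section KKT

variable {ι κ : Type*} [Fintype ι] [Fintype κ]

theorem Matrix.IsSymm.dotProduct_mulVec_comm {Q : Matrix ι ι ℝ} (hQ : Q.IsSymm) (y z : ι → ℝ) :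
    y ⬝ᵥ Q *ᵥ z = z ⬝ᵥ Q *ᵥ y := by
  rw [dotProduct_mulVec, ← mulVec_transpose, hQ.eq, dotProduct_comm]

theorem Matrix.IsSymm.quadratic_sub_quadratic {Q : Matrix ι ι ℝ} (hQ : Q.IsSymm) (q y z : ι → ℝ) :
    (1 / 2 * (z ⬝ᵥ Q *ᵥ z) + q ⬝ᵥ z) - (1 / 2 * (y ⬝ᵥ Q *ᵥ y) + q ⬝ᵥ y) =
      1 / 2 * ((z - y) ⬝ᵥ Q *ᵥ (z - y)) + (Q *ᵥ y + q) ⬝ᵥ (z - y) := by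
  have := hQ.dotProduct_mulVec_comm y z
  simp only [mulVec_sub, dotProduct_sub, sub_dotProduct, add_dotProduct,
    dotProduct_comm (Q *ᵥ y)]
  linarith

theorem Matrix.PosSemidef.quadratic_le_of_kkt {Q : Matrix ι ι ℝ} (hQ : Q.PosSemidef)
    {q : ι → ℝ} {A : Matrix κ ι ℝ} {b : κ → ℝ} {y : ι → ℝ} {l : κ → ℝ}
    (hstat : Q *ᵥ y + q = Aᵀ *ᵥ l) (hl : 0 ≤ l) (hcompl : l ⬝ᵥ (A *ᵥ y + b) = 0)
    {z : ι → ℝ} (hz : 0 ≤ A *ᵥ z + b) :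
    1 / 2 * (y ⬝ᵥ Q *ᵥ y) + q ⬝ᵥ y ≤ 1 / 2 * (z ⬝ᵥ Q *ᵥ z) + q ⬝ᵥ z := by
  have hsymm : Q.IsSymm := isHermitian_iff_isSymm.mp hQ.isHermitian
  have hcurv : 0 ≤ (z - y) ⬝ᵥ Q *ᵥ (z - y) := by
    simpa using hQ.dotProduct_mulVec_nonneg (z - y)
  have hslack : A *ᵥ (z - y) = (A *ᵥ z + b) - (A *ᵥ y + b) := by
    rw [mulVec_sub]
    abel
  have hgrad : (Q *ᵥ y + q) ⬝ᵥ (z - y) = l ⬝ᵥ (A *ᵥ z + b) := by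
    rw [hstat, mulVec_transpose, ← dotProduct_mulVec, hslack, dotProduct_sub, hcompl, sub_zero]
  have hdual : 0 ≤ l ⬝ᵥ (A *ᵥ z + b) := dotProduct_nonneg_of_nonneg hl hz
  linarith [hsymm.quadratic_sub_quadratic q y z]

/-- The set `H(I_a)` of the paper. -/
def qpPiece (Q : Matrix ι ι ℝ) (q : ι → ℝ) (A : Matrix κ ι ℝ) (b : κ → ℝ) (Ia : Set κ) :
    Set ((ι → ℝ) × (κ → ℝ)) :=
  {p | Q *ᵥ p.1 + q = Aᵀ *ᵥ p.2 ∧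
    (∀ i ∈ Ia, (A *ᵥ p.1 + b) i = 0) ∧ (∀ i ∉ Ia, 0 ≤ (A *ᵥ p.1 + b) i) ∧
    (∀ i ∈ Ia, 0 ≤ p.2 i) ∧ (∀ i ∉ Ia, p.2 i = 0)}

variable {Q : Matrix ι ι ℝ} {q : ι → ℝ} {A : Matrix κ ι ℝ} {b : κ → ℝ} {Ia : Set κ}

theorem mk_mem_qpPiece {x : ι → ℝ} {l : κ → ℝ} (hx : 0 ≤ A *ᵥ x + b) (hl : 0 ≤ l)
    (hstat : Q *ᵥ x + q = Aᵀ *ᵥ l) (hIa : ∀ i ∈ Ia, (A *ᵥ x + b) i = 0)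
    (hstrong : ∀ i, 0 < l i → i ∈ Ia) :
    (x, l) ∈ qpPiece Q q A b Ia :=
  ⟨hstat, hIa, fun i _ => hx i, fun i _ => hl i,
    fun i hi => (hl i).antisymm' (not_lt.mp (mt (hstrong i) hi))⟩

theorem kkt_of_mem_qpPiece {p : (ι → ℝ) × (κ → ℝ)} (hp : p ∈ qpPiece Q q A b Ia) :
    Q *ᵥ p.1 + q = Aᵀ *ᵥ p.2 ∧ 0 ≤ A *ᵥ p.1 + b ∧ 0 ≤ p.2 ∧ p.2 ⬝ᵥ (A *ᵥ p.1 + b) = 0 := by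
  obtain ⟨hstat, htight, hfeas, hl, hzero⟩ := hp
  classical
  refine ⟨hstat, fun i => ?_, fun i => ?_, Finset.sum_eq_zero fun i _ => ?_⟩ <;>
    by_cases hi : i ∈ Ia
  · exact (htight i hi).ge
  · exact hfeas i hi
  · exact hl i hi
  · exact (hzero i hi).ge
  · rw [htight i hi, mul_zero]
  · rw [hzero i hi, zero_mul]

end KKT

section Polyhedron

variable {n m : ℕ}

def IsAffineFunctional (f : (Fin n → ℝ) × (Fin m → ℝ) → ℝ) : Prop :=
  ∃ (u : Fin n → ℝ) (v : Fin m → ℝ) (w : ℝ), ∀ p, f p = u ⬝ᵥ p.1 + v ⬝ᵥ p.2 + w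

theorem IsAffineFunctional.sub {f g : (Fin n → ℝ) × (Fin m → ℝ) → ℝ}
    (hf : IsAffineFunctional f) (hg : IsAffineFunctional g) :
    IsAffineFunctional fun p => f p - g p := by
  obtain ⟨u, v, w, hf⟩ := hf
  obtain ⟨u', v', w', hg⟩ := hg
  exact ⟨u - u', v - v', w - w', fun p => by simp only [hf, hg, sub_dotProduct]; ring⟩

theorem isAffineFunctional_const (c : ℝ) : IsAffineFunctional (n := n) (m := m) fun _ => c :=
  ⟨0, 0, c, fun _ => by simp⟩

theorem isAffineFunctional_mulVec_fst_add {κ : Type*} (M : Matrix κ (Fin n) ℝ) (c : κ → ℝ)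
    (k : κ) : IsAffineFunctional (m := m) fun p => (M *ᵥ p.1 + c) k :=
  ⟨M k, 0, c k, fun _ => by simp [mulVec]⟩

theorem isAffineFunctional_mulVec_snd {κ : Type*} (M : Matrix κ (Fin m) ℝ) (k : κ) :
    IsAffineFunctional (n := n) fun p => (M *ᵥ p.2) k :=
  ⟨0, M k, 0, fun _ => by simp [mulVec]⟩

theorem isAffineFunctional_snd_apply (i : Fin m) :
    IsAffineFunctional (n := n) fun p => p.2 i :=
  ⟨0, Pi.single i 1, 0, fun _ => by simp⟩

theorem isPolyPi_iff_exists_iInter {S : Set ((Fin n → ℝ) × (Fin m → ℝ))} :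
    IsPolyPi S ↔ ∃ (ι : Type) (_ : Fintype ι) (u : ι → Fin n → ℝ) (v : ι → Fin m → ℝ)
      (w : ι → ℝ), S = ⋂ i, {p : (Fin n → ℝ) × (Fin m → ℝ) | w i ≤ u i ⬝ᵥ p.1 + v i ⬝ᵥ p.2} := by
  constructor
  · rintro ⟨k, u, v, w, rfl⟩
    exact ⟨Fin k, inferInstance, u, v, w, rfl⟩
  · rintro ⟨ι, _, u, v, w, rfl⟩
    let e := Fintype.equivFin ι
    exact ⟨_, u ∘ e.symm, v ∘ e.symm, w ∘ e.symm, (e.symm.surjective.iInter_comp _).symm⟩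

namespace IsPolyPi

theorem univ : IsPolyPi (Set.univ : Set ((Fin n → ℝ) × (Fin m → ℝ))) :=
  ⟨0, finZeroElim, finZeroElim, finZeroElim, (Set.iInter_of_empty _).symm⟩

theorem iInter {ι : Type} [Finite ι] {S : ι → Set ((Fin n → ℝ) × (Fin m → ℝ))}
    (h : ∀ i, IsPolyPi (S i)) : IsPolyPi (⋂ i, S i) := by
  have := Fintype.ofFinite ι
  choose k u v w hS using h
  refine isPolyPi_iff_exists_iInter.2 ⟨Σ i, Fin (k i), inferInstance,
    fun j => u j.1 j.2, fun j => v j.1 j.2, fun j => w j.1 j.2, ?_⟩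
  rw [Set.iInter_sigma]
  exact Set.iInter_congr hS

theorem iInter_prop {c : Prop} {S : Set ((Fin n → ℝ) × (Fin m → ℝ))} (h : IsPolyPi S) :
    IsPolyPi (⋂ _ : c, S) := by
  by_cases hc : c
  · simpa [hc] using h
  · simpa [hc] using univ

theorem inter {S T : Set ((Fin n → ℝ) × (Fin m → ℝ))} (hS : IsPolyPi S) (hT : IsPolyPi T) :
    IsPolyPi (S ∩ T) := by
  rw [Set.inter_eq_iInter]
  exact iInter (Bool.forall_bool.2 ⟨hT, hS⟩)

theorem isClosed {S : Set ((Fin n → ℝ) × (Fin m → ℝ))} (h : IsPolyPi S) : IsClosed S := by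
  obtain ⟨k, u, v, w, rfl⟩ := h
  refine isClosed_iInter fun i => isClosed_le continuous_const ?_
  unfold dotProduct
  fun_prop

end IsPolyPi

namespace IsAffineFunctional

variable {f g : (Fin n → ℝ) × (Fin m → ℝ) → ℝ}

theorem isPolyPi_setOf_le (hf : IsAffineFunctional f) (hg : IsAffineFunctional g) :
    IsPolyPi {p | f p ≤ g p} := by
  obtain ⟨u, v, w, h⟩ := hg.sub hf
  refine ⟨1, fun _ => u, fun _ => v, fun _ => -w, Set.ext fun p => ?_⟩
  simp only [Set.mem_ofPred_eq, Set.mem_iInter, forall_const]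
  have := h p
  constructor <;> intro <;> linarith

theorem isPolyPi_setOf_eq (hf : IsAffineFunctional f) (hg : IsAffineFunctional g) :
    IsPolyPi {p | f p = g p} := by
  simp only [le_antisymm_iff, Set.ofPred_and]
  exact (hf.isPolyPi_setOf_le hg).inter (hg.isPolyPi_setOf_le hf)

end IsAffineFunctional

theorem isPolyPi_qpPiece (Q : Matrix (Fin n) (Fin n) ℝ) (q : Fin n → ℝ)
    (A : Matrix (Fin m) (Fin n) ℝ) (b : Fin m → ℝ) (Ia : Set (Fin m)) :
    IsPolyPi (qpPiece Q q A b Ia) := by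
  have hres := isAffineFunctional_mulVec_fst_add (m := m) A b
  have hzero := isAffineFunctional_const (n := n) (m := m) 0
  simp only [qpPiece, funext_iff, Set.ofPred_and, Set.ofPred_forall]
  refine .inter (.iInter fun j => (isAffineFunctional_mulVec_fst_add Q q j).isPolyPi_setOf_eq
      (isAffineFunctional_mulVec_snd _ j)) <|
    .inter (.iInter fun i => .iInter_prop ?_) <| .inter (.iInter fun i => .iInter_prop ?_) <|
    .inter (.iInter fun i => .iInter_prop ?_) (.iInter fun i => .iInter_prop ?_)
  · exact (hres i).isPolyPi_setOf_eq hzero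
  · exact hzero.isPolyPi_setOf_le (hres i)
  · exact hzero.isPolyPi_setOf_le (isAffineFunctional_snd_apply i)
  · exact (isAffineFunctional_snd_apply i).isPolyPi_setOf_eq hzero

end Polyhedron

theorem qp_solution_piece_general {n m : ℕ} (Q : Matrix (Fin n) (Fin n) ℝ) (hQ : Q.PosSemidef)
    (q : Fin n → ℝ) (A : Matrix (Fin m) (Fin n) ℝ) (b : Fin m → ℝ)
    (x : Fin n → ℝ) (hx : ∀ i, 0 ≤ (A.mulVec x + b) i)
    (lam : Fin m → ℝ) (hlam : ∀ i, 0 ≤ lam i)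
    (hstat : Q.mulVec x + q = A.transpose.mulVec lam)
    (Ia : Set (Fin m)) (hIa : ∀ i ∈ Ia, (A.mulVec x + b) i = 0)
    (hstrong : ∀ i, 0 < lam i → i ∈ Ia) :
    (x, lam) ∈ {p : (Fin n → ℝ) × (Fin m → ℝ) |
        Q.mulVec p.1 + q = A.transpose.mulVec p.2 ∧
        (∀ i ∈ Ia, (A.mulVec p.1 + b) i = 0) ∧
        (∀ i ∉ Ia, 0 ≤ (A.mulVec p.1 + b) i) ∧
        (∀ i ∈ Ia, 0 ≤ p.2 i) ∧ (∀ i ∉ Ia, p.2 i = 0)} ∧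
      IsClosed {p : (Fin n → ℝ) × (Fin m → ℝ) |
        Q.mulVec p.1 + q = A.transpose.mulVec p.2 ∧
        (∀ i ∈ Ia, (A.mulVec p.1 + b) i = 0) ∧
        (∀ i ∉ Ia, 0 ≤ (A.mulVec p.1 + b) i) ∧
        (∀ i ∈ Ia, 0 ≤ p.2 i) ∧ (∀ i ∉ Ia, p.2 i = 0)} ∧
      IsPolyPi {p : (Fin n → ℝ) × (Fin m → ℝ) |
        Q.mulVec p.1 + q = A.transpose.mulVec p.2 ∧
        (∀ i ∈ Ia, (A.mulVec p.1 + b) i = 0) ∧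
        (∀ i ∉ Ia, 0 ≤ (A.mulVec p.1 + b) i) ∧
        (∀ i ∈ Ia, 0 ≤ p.2 i) ∧ (∀ i ∉ Ia, p.2 i = 0)} ∧
      ∀ p : (Fin n → ℝ) × (Fin m → ℝ),
        (Q.mulVec p.1 + q = A.transpose.mulVec p.2 ∧
          (∀ i ∈ Ia, (A.mulVec p.1 + b) i = 0) ∧
          (∀ i ∉ Ia, 0 ≤ (A.mulVec p.1 + b) i) ∧
          (∀ i ∈ Ia, 0 ≤ p.2 i) ∧ (∀ i ∉ Ia, p.2 i = 0)) →
        ∀ z : Fin n → ℝ, (∀ i, 0 ≤ (A.mulVec z + b) i) →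
          (1 / 2) * (p.1 ⬝ᵥ Q.mulVec p.1) + q ⬝ᵥ p.1 ≤
            (1 / 2) * (z ⬝ᵥ Q.mulVec z) + q ⬝ᵥ z := by
  have hpoly := isPolyPi_qpPiece Q q A b Ia
  refine ⟨mk_mem_qpPiece hx hlam hstat hIa hstrong, hpoly.isClosed, hpoly, fun p hp z hz => ?_⟩
  obtain ⟨hstat', -, hl, hcompl⟩ := kkt_of_mem_qpPiece hp
  exact hQ.quadratic_le_of_kkt hstat' hl hcompl hz

/-- The polyhedral pieces of the QP solution graph enumerated in Algorithm 2: given a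
KKT point `(x, λ*)` and any active set `I_a` containing the strongly active indices,
the set `H(I_a)` is a closed polyhedron containing `(x, λ*)`, and every point of it
satisfies the KKT conditions, hence its primal part is a global minimizer of the QP. -/
theorem qp_solution_piece {n m : ℕ} (Q : Matrix (Fin n) (Fin n) ℝ) (hQ : Q.PosSemidef)
    (q : Fin n → ℝ) (A : Matrix (Fin m) (Fin n) ℝ) (b : Fin m → ℝ)
    (x : Fin n → ℝ) (hx : ∀ i, 0 ≤ (A.mulVec x + b) i)
    (lam : Fin m → ℝ) (hlam : ∀ i, 0 ≤ lam i)
    (hcomp : ∀ i, (A.mulVec x + b) i ≠ 0 → lam i = 0)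
    (hstat : Q.mulVec x + q = A.transpose.mulVec lam)
    (Ia : Set (Fin m)) (hIa : ∀ i ∈ Ia, (A.mulVec x + b) i = 0)
    (hstrong : ∀ i, 0 < lam i → i ∈ Ia) :
    (x, lam) ∈ {p : (Fin n → ℝ) × (Fin m → ℝ) |
        Q.mulVec p.1 + q = A.transpose.mulVec p.2 ∧
        (∀ i ∈ Ia, (A.mulVec p.1 + b) i = 0) ∧
        (∀ i ∉ Ia, 0 ≤ (A.mulVec p.1 + b) i) ∧
        (∀ i ∈ Ia, 0 ≤ p.2 i) ∧ (∀ i ∉ Ia, p.2 i = 0)} ∧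
      IsClosed {p : (Fin n → ℝ) × (Fin m → ℝ) |
        Q.mulVec p.1 + q = A.transpose.mulVec p.2 ∧
        (∀ i ∈ Ia, (A.mulVec p.1 + b) i = 0) ∧
        (∀ i ∉ Ia, 0 ≤ (A.mulVec p.1 + b) i) ∧
        (∀ i ∈ Ia, 0 ≤ p.2 i) ∧ (∀ i ∉ Ia, p.2 i = 0)} ∧
      IsPolyPi {p : (Fin n → ℝ) × (Fin m → ℝ) |
        Q.mulVec p.1 + q = A.transpose.mulVec p.2 ∧
        (∀ i ∈ Ia, (A.mulVec p.1 + b) i = 0) ∧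
        (∀ i ∉ Ia, 0 ≤ (A.mulVec p.1 + b) i) ∧
        (∀ i ∈ Ia, 0 ≤ p.2 i) ∧ (∀ i ∉ Ia, p.2 i = 0)} ∧
      ∀ p : (Fin n → ℝ) × (Fin m → ℝ),
        (Q.mulVec p.1 + q = A.transpose.mulVec p.2 ∧
          (∀ i ∈ Ia, (A.mulVec p.1 + b) i = 0) ∧
          (∀ i ∉ Ia, 0 ≤ (A.mulVec p.1 + b) i) ∧
          (∀ i ∈ Ia, 0 ≤ p.2 i) ∧ (∀ i ∉ Ia, p.2 i = 0)) →
        ∀ z : Fin n → ℝ, (∀ i, 0 ≤ (A.mulVec z + b) i) →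
          (1 / 2) * (p.1 ⬝ᵥ Q.mulVec p.1) + q ⬝ᵥ p.1 ≤
            (1 / 2) * (z ⬝ᵥ Q.mulVec z) + q ⬝ᵥ z :=
  qp_solution_piece_general Q hQ q A b x hx lam hlam hstat Ia hIa hstrong
end
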